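/- Let 0 < q < 1, let n be a positive integer, and let z be complex with |z| \le 1 (i.e., the case t = 0, u on the closed unit disc). Then |(q;q)_n S_n(z;q) - A_q(z)| \le \left[\frac{q^{n/2}}{1-q} + \frac{2}{1-q}\left(\frac12\right)^{\lfloor n/2 \rfloor}\right] A_q(-|z|) for all sufficiently large n. -/

import Mathlib

open Finset

/-- `(q;q)_k = ∏_{i=1}^{k}(1-q^i)` over `ℝ`. -/
noncomputable def qPochFin (q : ℝ) (k : ℕ) : ℝ := ∏ i ∈ range k, (1 - q ^ (i + 1))

/-- `(q;q)_k` as a complex number. -/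
noncomputable def qPochC (q : ℝ) (k : ℕ) : ℂ := ∏ i ∈ range k, (1 - (q : ℂ) ^ (i + 1))

/-- The Stieltjes-Wigert polynomial `S_n(z;q)`. -/
noncomputable def SW (q : ℝ) (n : ℕ) (z : ℂ) : ℂ :=
  ∑ j ∈ range (n + 1), (q : ℂ) ^ (j ^ 2) * (-z) ^ j / (qPochC q j * qPochC q (n - j))

/-- The q-Airy function `A_q(z)`. -/
noncomputable def qAiry (q : ℝ) (z : ℂ) : ℂ :=
  ∑' k : ℕ, (q : ℂ) ^ (k ^ 2) * (-z) ^ k / qPochC q k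

/-- `A_q(-x)` for real `x ≥ 0`, i.e. `∑_{k=0}^∞ q^{k²} x^k/(q;q)_k`. -/
noncomputable def qAiryNeg (q x : ℝ) : ℝ := ∑' k : ℕ, q ^ (k ^ 2) * x ^ k / qPochFin q k

/-!
Let `t_j = q^{j²}(-z)^j/(q;q)_j` be the terms of `A_q(z)`. Then
`(q;q)_n S_n(z;q) = ∑_j w_j t_j` with `w_j = (q;q)_n/(q;q)_{n-j} = ∏_{n-j ≤ i < n} (1 - q^{i+1})`
for `j ≤ n` and `w_j = 0` for `j > n`, so `|(q;q)_n S_n - A_q| ≤ ∑_j |t_j| (1 - w_j)`.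
Weierstrass' product inequality gives `1 - w_j ≤ q^{n-j+1}/(1-q) ≤ q^{n/2}/(1-q)` for `j ≤ n/2`,
which bounds that part of the sum by `q^{n/2}/(1-q) · A_q(-|z|)`. For `j > n/2` only
`1 - w_j ≤ 1` is used: as `(q;q)_j` is bounded below uniformly in `j`, this part is
`O(q^{(n/2+1)²})`, which eventually beats `(1/2)^{n/2}`.
-/

open Filter

theorem Finset.one_sub_sum_le_prod_one_sub {ι R : Type*} [CommRing R] [LinearOrder R]
    [IsStrictOrderedRing R] (s : Finset ι) {f : ι → R} (h0 : ∀ i ∈ s, 0 ≤ f i)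
    (h1 : ∀ i ∈ s, f i ≤ 1) : 1 - ∑ i ∈ s, f i ≤ ∏ i ∈ s, (1 - f i) := by
  induction s using Finset.cons_induction with
  | empty => simp
  | cons a s _ ih =>
    rw [prod_cons, sum_cons]
    have ha0 := h0 a (mem_cons_self a s)
    have ha1 := h1 a (mem_cons_self a s)
    have hs := ih (fun i hi => h0 i (mem_cons_of_mem hi)) fun i hi => h1 i (mem_cons_of_mem hi)
    have hs0 : 0 ≤ ∑ i ∈ s, f i := sum_nonneg fun i hi => h0 i (mem_cons_of_mem hi)
    nlinarith

theorem eventually_pow_sq_le_mul_half_pow {q : ℝ} (hq0 : 0 ≤ q) (hq1 : q < 1) {c : ℝ}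
    (hc : 0 < c) : ∀ᶠ m : ℕ in atTop, q ^ (m ^ 2) ≤ c * (1 / 2) ^ m := by
  have h := tendsto_pow_atTop_nhds_zero_of_lt_one hq0 hq1
  filter_upwards [h.eventually_le_const (half_pos hc), h.eventually_le_const one_half_pos,
    eventually_ge_atTop 1] with m hqc hq2 hm
  calc q ^ (m ^ 2) = (2 * q ^ m) ^ m * (1 / 2) ^ m := by
        rw [← mul_pow, sq, pow_mul]
        ring
    _ ≤ 2 * q ^ m * (1 / 2) ^ m :=
        mul_le_mul_of_nonneg_right (pow_le_of_le_one (by positivity) (by linarith) (by omega))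
          (by positivity)
    _ ≤ c * (1 / 2) ^ m := mul_le_mul_of_nonneg_right (by linarith) (by positivity)

section qPochhammer

variable {q : ℝ}

theorem qPochC_eq_ofReal (q : ℝ) (k : ℕ) : qPochC q k = qPochFin q k := by
  simp [qPochC, qPochFin]

theorem one_sub_pow_succ_pos (hq0 : 0 ≤ q) (hq1 : q < 1) (i : ℕ) : 0 < 1 - q ^ (i + 1) :=
  sub_pos.2 (pow_lt_one₀ hq0 hq1 i.succ_ne_zero)

theorem qPochFin_pos (hq0 : 0 ≤ q) (hq1 : q < 1) (k : ℕ) : 0 < qPochFin q k :=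
  prod_pos fun i _ => one_sub_pow_succ_pos hq0 hq1 i

theorem qPochFin_mul_prod_Ico {a b : ℕ} (h : a ≤ b) :
    qPochFin q a * ∏ i ∈ Ico a b, (1 - q ^ (i + 1)) = qPochFin q b :=
  prod_range_mul_prod_Ico _ h

theorem prod_Ico_one_sub_pow_succ_nonneg (hq0 : 0 ≤ q) (hq1 : q < 1) (a b : ℕ) :
    0 ≤ ∏ i ∈ Ico a b, (1 - q ^ (i + 1)) :=
  prod_nonneg fun i _ => (one_sub_pow_succ_pos hq0 hq1 i).le

theorem prod_Ico_one_sub_pow_succ_le_one (hq0 : 0 ≤ q) (hq1 : q < 1) (a b : ℕ) :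
    ∏ i ∈ Ico a b, (1 - q ^ (i + 1)) ≤ 1 :=
  prod_le_one (fun i _ => (one_sub_pow_succ_pos hq0 hq1 i).le) fun _ _ =>
    sub_le_self _ (pow_nonneg hq0 _)

theorem one_sub_pow_succ_div_le_prod_Ico (hq0 : 0 ≤ q) (hq1 : q < 1) (a b : ℕ) :
    1 - q ^ (a + 1) / (1 - q) ≤ ∏ i ∈ Ico a b, (1 - q ^ (i + 1)) := by
  have hgeom : ∑ i ∈ Ico a b, q ^ (i + 1) ≤ q ^ (a + 1) / (1 - q) := by
    rw [sum_Ico_add' (q ^ ·) a b 1]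
    exact geom_sum_Ico_le_of_lt_one hq0 hq1
  calc 1 - q ^ (a + 1) / (1 - q) ≤ 1 - ∑ i ∈ Ico a b, q ^ (i + 1) := by linarith
    _ ≤ ∏ i ∈ Ico a b, (1 - q ^ (i + 1)) :=
      one_sub_sum_le_prod_one_sub _ (fun i _ => pow_nonneg hq0 _) fun i _ =>
        (pow_lt_one₀ hq0 hq1 i.succ_ne_zero).le

theorem qPochFin_antitone (hq0 : 0 ≤ q) (hq1 : q < 1) : Antitone (qPochFin q) := fun a b h => by
  rw [← qPochFin_mul_prod_Ico h]
  exact mul_le_of_le_one_right (qPochFin_pos hq0 hq1 a).le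
    (prod_Ico_one_sub_pow_succ_le_one hq0 hq1 a b)

/-- Past an index `K` with `q^{K+1} < 1 - q`, the factors beyond `(q;q)_K` multiply to at least
`1 - q^{K+1}/(1-q) > 0`. -/
theorem exists_pos_forall_le_qPochFin (hq0 : 0 ≤ q) (hq1 : q < 1) :
    ∃ c > 0, ∀ k, c ≤ qPochFin q k := by
  have h1q : 0 < 1 - q := sub_pos.2 hq1
  obtain ⟨K, hK⟩ := eventually_atTop.1
    ((tendsto_pow_atTop_nhds_zero_of_lt_one hq0 hq1).eventually_lt_const h1q)
  have hfactor : 0 < 1 - q ^ (K + 1) / (1 - q) := by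
    rw [sub_pos, div_lt_one h1q]
    exact hK (K + 1) K.le_succ
  refine ⟨qPochFin q K * (1 - q ^ (K + 1) / (1 - q)),
    mul_pos (qPochFin_pos hq0 hq1 K) hfactor, fun k => ?_⟩
  rcases le_total k K with hk | hk
  · calc qPochFin q K * (1 - q ^ (K + 1) / (1 - q)) ≤ qPochFin q K :=
          mul_le_of_le_one_right (qPochFin_pos hq0 hq1 K).le (sub_le_self _ (by positivity))
      _ ≤ qPochFin q k := qPochFin_antitone hq0 hq1 hk
  · rw [← qPochFin_mul_prod_Ico hk]
    exact mul_le_mul_of_nonneg_left (one_sub_pow_succ_div_le_prod_Ico hq0 hq1 K k)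
      (qPochFin_pos hq0 hq1 K).le

end qPochhammer

section StieltjesWigert

variable {q : ℝ}

/-- Set to `0` for `j > n`, where `n - j` would truncate to `0`. -/
noncomputable def swWeight (q : ℝ) (n j : ℕ) : ℝ :=
  if j ≤ n then qPochFin q n / qPochFin q (n - j) else 0

noncomputable def qAiryTerm (q : ℝ) (z : ℂ) (k : ℕ) : ℂ := (q : ℂ) ^ (k ^ 2) * (-z) ^ k / qPochC q k

theorem qAiry_eq_tsum_qAiryTerm (q : ℝ) (z : ℂ) : qAiry q z = ∑' k, qAiryTerm q z k := rfl

theorem swWeight_eq_prod_Ico (hq0 : 0 ≤ q) (hq1 : q < 1) {n j : ℕ} (hj : j ≤ n) :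
    swWeight q n j = ∏ i ∈ Ico (n - j) n, (1 - q ^ (i + 1)) := by
  rw [swWeight, if_pos hj, ← qPochFin_mul_prod_Ico (Nat.sub_le n j),
    mul_div_cancel_left₀ _ (qPochFin_pos hq0 hq1 _).ne']

theorem swWeight_nonneg (hq0 : 0 ≤ q) (hq1 : q < 1) (n j : ℕ) : 0 ≤ swWeight q n j := by
  by_cases hj : j ≤ n
  · rw [swWeight_eq_prod_Ico hq0 hq1 hj]
    exact prod_Ico_one_sub_pow_succ_nonneg hq0 hq1 _ _
  · simp [swWeight, hj]

theorem swWeight_le_one (hq0 : 0 ≤ q) (hq1 : q < 1) (n j : ℕ) : swWeight q n j ≤ 1 := by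
  by_cases hj : j ≤ n
  · rw [swWeight_eq_prod_Ico hq0 hq1 hj]
    exact prod_Ico_one_sub_pow_succ_le_one hq0 hq1 _ _
  · simp [swWeight, hj]

theorem one_sub_swWeight_le (hq0 : 0 ≤ q) (hq1 : q < 1) {n j : ℕ} (hj : j ≤ n / 2) :
    1 - swWeight q n j ≤ q ^ ((n : ℝ) / 2) / (1 - q) := by
  have hjn : j ≤ n := hj.trans (Nat.div_le_self n 2)
  have hpow : q ^ (n - j + 1) ≤ q ^ ((n : ℝ) / 2) := by
    rw [← Real.rpow_natCast]
    refine Real.rpow_le_rpow_of_exponent_ge' hq0 hq1.le (by positivity) ?_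
    have hj' : (j : ℝ) ≤ n / 2 := (Nat.cast_le.2 hj).trans Nat.cast_div_le
    push_cast [Nat.cast_sub hjn]
    linarith
  rw [swWeight_eq_prod_Ico hq0 hq1 hjn]
  have := one_sub_pow_succ_div_le_prod_Ico hq0 hq1 (n - j) n
  have := div_le_div_of_nonneg_right hpow (sub_pos.2 hq1).le
  linarith

theorem norm_qAiryTerm (hq0 : 0 ≤ q) (hq1 : q < 1) (z : ℂ) (k : ℕ) :
    ‖qAiryTerm q z k‖ = q ^ (k ^ 2) * ‖z‖ ^ k / qPochFin q k := by
  rw [qAiryTerm, qPochC_eq_ofReal, norm_div, norm_mul, norm_pow, norm_pow, norm_neg,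
    Complex.norm_real, Complex.norm_real, Real.norm_of_nonneg hq0,
    Real.norm_of_nonneg (qPochFin_pos hq0 hq1 k).le]

theorem summable_qAiryNeg (hq0 : 0 ≤ q) (hq1 : q < 1) (x : ℝ) :
    Summable fun k : ℕ => q ^ (k ^ 2) * x ^ k / qPochFin q k := by
  obtain ⟨c, hc0, hc⟩ := exists_pos_forall_le_qPochFin hq0 hq1
  have hsmall : ∀ᶠ k : ℕ in atTop, q ^ k * |x| ≤ 1 / 2 := by
    have h := (tendsto_pow_atTop_nhds_zero_of_lt_one hq0 hq1).mul_const |x|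
    rw [zero_mul] at h
    exact h.eventually_le_const (by norm_num)
  refine summable_geometric_two.div_const c |>.of_norm_bounded_eventually ?_
  rw [Nat.cofinite_eq_atTop]
  filter_upwards [hsmall] with k hk
  rw [Real.norm_eq_abs, abs_div, abs_mul, abs_pow, abs_pow, abs_of_nonneg hq0,
    abs_of_pos (qPochFin_pos hq0 hq1 k), sq, pow_mul, ← mul_pow]
  exact div_le_div₀ (by positivity) (pow_le_pow_left₀ (by positivity) hk k) hc0 (hc k)

theorem summable_norm_qAiryTerm (hq0 : 0 ≤ q) (hq1 : q < 1) (z : ℂ) :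
    Summable fun k => ‖qAiryTerm q z k‖ := by
  simpa only [norm_qAiryTerm hq0 hq1] using summable_qAiryNeg hq0 hq1 ‖z‖

theorem qAiryNeg_norm_eq_tsum (hq0 : 0 ≤ q) (hq1 : q < 1) (z : ℂ) :
    qAiryNeg q ‖z‖ = ∑' k, ‖qAiryTerm q z k‖ := by
  simp only [norm_qAiryTerm hq0 hq1, qAiryNeg]

theorem one_le_qAiryNeg (hq0 : 0 ≤ q) (hq1 : q < 1) {x : ℝ} (hx : 0 ≤ x) : 1 ≤ qAiryNeg q x := by
  calc (1 : ℝ) = q ^ (0 ^ 2) * x ^ 0 / qPochFin q 0 := by simp [qPochFin]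
    _ ≤ qAiryNeg q x := (summable_qAiryNeg hq0 hq1 x).le_tsum 0 fun k _ =>
        div_nonneg (by positivity) (qPochFin_pos hq0 hq1 k).le

theorem qPochC_mul_SW_eq_tsum (hq0 : 0 ≤ q) (hq1 : q < 1) (n : ℕ) (z : ℂ) :
    qPochC q n * SW q n z = ∑' j, qAiryTerm q z j * swWeight q n j := by
  rw [tsum_eq_sum (s := range (n + 1)) fun j hj => by
    simp [swWeight, Nat.lt_succ_iff.not.1 (mt mem_range.2 hj)]]
  rw [SW, mul_sum]
  refine sum_congr rfl fun j hj => ?_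
  have hjn := Nat.lt_succ_iff.1 (mem_range.1 hj)
  have hj0 : (qPochFin q j : ℂ) ≠ 0 := Complex.ofReal_ne_zero.2 (qPochFin_pos hq0 hq1 j).ne'
  have hnj0 : (qPochFin q (n - j) : ℂ) ≠ 0 :=
    Complex.ofReal_ne_zero.2 (qPochFin_pos hq0 hq1 (n - j)).ne'
  rw [swWeight, if_pos hjn, qAiryTerm, qPochC_eq_ofReal, qPochC_eq_ofReal, qPochC_eq_ofReal]
  push_cast
  field_simp

theorem summable_norm_qAiryTerm_mul_one_sub_swWeight (hq0 : 0 ≤ q) (hq1 : q < 1) (n : ℕ)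
    (z : ℂ) : Summable fun j => ‖qAiryTerm q z j‖ * (1 - swWeight q n j) :=
  (summable_norm_qAiryTerm hq0 hq1 z).of_nonneg_of_le
    (fun j => mul_nonneg (norm_nonneg _) (sub_nonneg.2 (swWeight_le_one hq0 hq1 n j)))
    fun j => mul_le_of_le_one_right (norm_nonneg _) (sub_le_self _ (swWeight_nonneg hq0 hq1 n j))

theorem norm_qPochC_mul_SW_sub_qAiry_le_tsum (hq0 : 0 ≤ q) (hq1 : q < 1) (n : ℕ) (z : ℂ) :
    ‖qPochC q n * SW q n z - qAiry q z‖ ≤ ∑' j, ‖qAiryTerm q z j‖ * (1 - swWeight q n j) := by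
  have hsum := summable_norm_qAiryTerm hq0 hq1 z
  have hnorm : ∀ j, ‖qAiryTerm q z j * swWeight q n j - qAiryTerm q z j‖ =
      ‖qAiryTerm q z j‖ * (1 - swWeight q n j) := fun j => by
    rw [← mul_sub_one, norm_mul, ← Complex.ofReal_one, ← Complex.ofReal_sub, Complex.norm_real,
      Real.norm_of_nonpos (sub_nonpos.2 (swWeight_le_one hq0 hq1 n j)), neg_sub]
  have hweighted : Summable fun j => qAiryTerm q z j * swWeight q n j :=
    hsum.of_norm_bounded fun j => by
      rw [norm_mul, Complex.norm_real, Real.norm_of_nonneg (swWeight_nonneg hq0 hq1 n j)]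
      exact mul_le_of_le_one_right (norm_nonneg _) (swWeight_le_one hq0 hq1 n j)
  rw [qPochC_mul_SW_eq_tsum hq0 hq1, qAiry_eq_tsum_qAiryTerm,
    ← hweighted.tsum_sub hsum.of_norm, ← tsum_congr hnorm]
  refine norm_tsum_le_tsum_norm ?_
  simpa only [hnorm] using summable_norm_qAiryTerm_mul_one_sub_swWeight hq0 hq1 n z

theorem sum_range_norm_qAiryTerm_mul_one_sub_swWeight_le (hq0 : 0 ≤ q) (hq1 : q < 1) {n m : ℕ}
    (hm : m ≤ n / 2 + 1) (z : ℂ) :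
    ∑ j ∈ range m, ‖qAiryTerm q z j‖ * (1 - swWeight q n j) ≤
      q ^ ((n : ℝ) / 2) / (1 - q) * qAiryNeg q ‖z‖ := by
  have hhead : ∑ j ∈ range m, ‖qAiryTerm q z j‖ ≤ qAiryNeg q ‖z‖ := by
    rw [qAiryNeg_norm_eq_tsum hq0 hq1]
    exact (summable_norm_qAiryTerm hq0 hq1 z).sum_le_tsum _ fun _ _ => norm_nonneg _
  calc ∑ j ∈ range m, ‖qAiryTerm q z j‖ * (1 - swWeight q n j)
      ≤ ∑ j ∈ range m, ‖qAiryTerm q z j‖ * (q ^ ((n : ℝ) / 2) / (1 - q)) :=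
        sum_le_sum fun j hj => mul_le_mul_of_nonneg_left
          (one_sub_swWeight_le hq0 hq1 (by have := mem_range.1 hj; omega)) (norm_nonneg _)
    _ = q ^ ((n : ℝ) / 2) / (1 - q) * ∑ j ∈ range m, ‖qAiryTerm q z j‖ := by
        rw [← sum_mul, mul_comm]
    _ ≤ q ^ ((n : ℝ) / 2) / (1 - q) * qAiryNeg q ‖z‖ :=
        mul_le_mul_of_nonneg_left hhead (div_nonneg (by positivity) (sub_pos.2 hq1).le)

theorem tsum_norm_qAiryTerm_add_le (hq0 : 0 ≤ q) (hq1 : q < 1) {z : ℂ} (hz : ‖z‖ ≤ 1) {c : ℝ}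
    (hc0 : 0 < c) (hc : ∀ k, c ≤ qPochFin q k) (m : ℕ) :
    ∑' k, ‖qAiryTerm q z (k + m)‖ ≤ q ^ (m ^ 2) / (c * (1 - q)) := by
  have hterm : ∀ k, ‖qAiryTerm q z (k + m)‖ ≤ q ^ (m ^ 2) / c * q ^ k := fun k => by
    have hexp : m ^ 2 + k ≤ (k + m) ^ 2 := by nlinarith [Nat.le_mul_self k, Nat.zero_le (k * m)]
    rw [norm_qAiryTerm hq0 hq1]
    calc q ^ ((k + m) ^ 2) * ‖z‖ ^ (k + m) / qPochFin q (k + m) ≤ q ^ (m ^ 2 + k) * 1 / c :=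
          div_le_div₀ (by positivity) (mul_le_mul (pow_le_pow_of_le_one hq0 hq1.le hexp)
            (pow_le_one₀ (norm_nonneg z) hz) (by positivity) (by positivity)) hc0 (hc _)
      _ = q ^ (m ^ 2) / c * q ^ k := by ring
  calc ∑' k, ‖qAiryTerm q z (k + m)‖ ≤ ∑' k, q ^ (m ^ 2) / c * q ^ k :=
        Summable.tsum_le_tsum hterm ((summable_nat_add_iff m).2 (summable_norm_qAiryTerm hq0 hq1 z))
          ((summable_geometric_of_lt_one hq0 hq1).mul_left _)
    _ = q ^ (m ^ 2) / (c * (1 - q)) := by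
        rw [tsum_mul_left, tsum_geometric_of_lt_one hq0 hq1, ← div_eq_mul_inv, div_div]

theorem norm_qPochC_mul_SW_sub_qAiry_le (hq0 : 0 ≤ q) (hq1 : q < 1) {z : ℂ} (hz : ‖z‖ ≤ 1)
    {c : ℝ} (hc0 : 0 < c) (hc : ∀ k, c ≤ qPochFin q k) {n m : ℕ} (hm : m ≤ n / 2 + 1) :
    ‖qPochC q n * SW q n z - qAiry q z‖ ≤
      q ^ ((n : ℝ) / 2) / (1 - q) * qAiryNeg q ‖z‖ + q ^ (m ^ 2) / (c * (1 - q)) := by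
  have hsum := summable_norm_qAiryTerm_mul_one_sub_swWeight hq0 hq1 n z
  have htail : ∑' k, ‖qAiryTerm q z (k + m)‖ * (1 - swWeight q n (k + m)) ≤
      ∑' k, ‖qAiryTerm q z (k + m)‖ :=
    Summable.tsum_le_tsum (fun k => mul_le_of_le_one_right (norm_nonneg _)
        (sub_le_self _ (swWeight_nonneg hq0 hq1 _ _)))
      ((summable_nat_add_iff m).2 hsum)
      ((summable_nat_add_iff m).2 (summable_norm_qAiryTerm hq0 hq1 z))
  calc ‖qPochC q n * SW q n z - qAiry q z‖
      ≤ ∑' j, ‖qAiryTerm q z j‖ * (1 - swWeight q n j) :=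
        norm_qPochC_mul_SW_sub_qAiry_le_tsum hq0 hq1 n z
    _ = ∑ j ∈ range m, ‖qAiryTerm q z j‖ * (1 - swWeight q n j) +
          ∑' k, ‖qAiryTerm q z (k + m)‖ * (1 - swWeight q n (k + m)) :=
        (hsum.sum_add_tsum_nat_add m).symm
    _ ≤ q ^ ((n : ℝ) / 2) / (1 - q) * qAiryNeg q ‖z‖ + q ^ (m ^ 2) / (c * (1 - q)) :=
        add_le_add (sum_range_norm_qAiryTerm_mul_one_sub_swWeight_le hq0 hq1 hm z)
          (htail.trans (tsum_norm_qAiryTerm_add_le hq0 hq1 hz hc0 hc m))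

end StieltjesWigert

theorem sw_global_asymptotics_t_zero (q : ℝ) (hq0 : 0 < q) (hq1 : q < 1) :
    ∃ N : ℕ, ∀ n : ℕ, N ≤ n → 0 < n → ∀ z : ℂ, ‖z‖ ≤ 1 →
      ‖qPochC q n * SW q n z - qAiry q z‖ ≤
        (q ^ ((n : ℝ) / 2) / (1 - q) + (2 / (1 - q)) * (1 / 2 : ℝ) ^ (n / 2)) *
          qAiryNeg q ‖z‖ := by
  obtain ⟨c, hc0, hc⟩ := exists_pos_forall_le_qPochFin hq0.le hq1
  obtain ⟨N, hN⟩ := eventually_atTop.1 (eventually_pow_sq_le_mul_half_pow hq0.le hq1 hc0)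
  refine ⟨2 * N, fun n hn _ z hz => ?_⟩
  have h1q : 0 < 1 - q := sub_pos.2 hq1
  have hA := one_le_qAiryNeg hq0.le hq1 (norm_nonneg z)
  have htail : q ^ ((n / 2 + 1) ^ 2) / (c * (1 - q)) ≤
      2 / (1 - q) * (1 / 2) ^ (n / 2) * qAiryNeg q ‖z‖ :=
    calc q ^ ((n / 2 + 1) ^ 2) / (c * (1 - q)) ≤ c * (1 / 2) ^ (n / 2 + 1) / (c * (1 - q)) := by
          gcongr
          exact hN _ (by omega)
      _ = 1 / 4 * (2 / (1 - q) * (1 / 2) ^ (n / 2)) := by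
          field_simp
          ring
      _ ≤ 2 / (1 - q) * (1 / 2) ^ (n / 2) * qAiryNeg q ‖z‖ := by
          have : 0 ≤ 2 / (1 - q) * (1 / 2 : ℝ) ^ (n / 2) := by positivity
          nlinarith
  calc ‖qPochC q n * SW q n z - qAiry q z‖
      ≤ q ^ ((n : ℝ) / 2) / (1 - q) * qAiryNeg q ‖z‖ + q ^ ((n / 2 + 1) ^ 2) / (c * (1 - q)) :=
        norm_qPochC_mul_SW_sub_qAiry_le hq0.le hq1 hz hc0 hc le_rfl
    _ ≤ _ := by linarith
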